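/- Let K_n denote the complete graph on n ≥ 3 vertices. Then the differential of its subdivision graph satisfies ∂(S(K_n)) = n(n−1)/2 + 2 − n. -/

import Mathlib

/-- The subdivision graph `S(G)`: vertices are `V(G) ⊕ E(G)`, with `v ∈ V(G)` adjacent to
`e ∈ E(G)` iff `v` is an endpoint of `e`. -/
def subdivision {V : Type*} (G : SimpleGraph V) : SimpleGraph (V ⊕ G.edgeSet) where
  Adj a b :=
    match a, b with
    | Sum.inl v, Sum.inr e => v ∈ (e : Sym2 V)
    | Sum.inr e, Sum.inl v => v ∈ (e : Sym2 V)
    | _, _ => False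
  symm := ⟨by rintro (v | e) (w | f) h <;> simp_all⟩
  loopless := ⟨by rintro (v | e) h <;> simp_all⟩

/-- `B(D)`: the set of vertices outside `D` that have a neighbour in `D`. -/
def extBoundary {W : Type*} (H : SimpleGraph W) (D : Set W) : Set W :=
  {v | v ∉ D ∧ ∃ u ∈ D, H.Adj u v}

/-- The differential of a set of vertices: `∂(D) = |B(D)| - |D|`. -/
noncomputable def setDifferential {W : Type*} (H : SimpleGraph W) (D : Set W) : ℤ :=
  ((extBoundary H D).ncard : ℤ) - (D.ncard : ℤ)

/-- The differential of a graph: `∂(H) = max {∂(D) : D ⊆ V(H)}`. -/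
noncomputable def graphDifferential {W : Type*} (H : SimpleGraph W) : ℤ :=
  sSup {x : ℤ | ∃ D : Set W, x = setDifferential H D}

/-!
Write `D = A ∪ F` with `A ⊆ V` and `F ⊆ E`, and let `c = |V ∖ A|`. A vertex in `B(D)` lies
outside `A` and on an edge of `F`, so there are at most `min (2 |F|, c)` of them; an edge in
`B(D)` has an end in `A`, so it is none of the `c (c - 1) / 2` edges inside `V ∖ A`. Hence
`2 ∂(D) ≤ 2 (|E| + 2 - |V|) - (c - 2)²`. Equality is attained by `D = (V ∖ {u, v}) ∪ {uv}`
for an edge `uv`: its boundary is `{u, v}` together with all other edges, since each of them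
has an end outside `{u, v}`.
-/

open Set

lemma Set.ncard_preimage_inl_add_ncard_preimage_inr {α β : Type*} [Finite α] [Finite β]
    (s : Set (α ⊕ β)) : (Sum.inl ⁻¹' s).ncard + (Sum.inr ⁻¹' s).ncard = s.ncard := by
  conv_rhs => rw [← Set.sumEquiv.symm_apply_apply s, Set.sumEquiv_symm_apply]
  rw [ncard_union_eq disjoint_image_inl_image_inr, ncard_image_of_injective _ Sum.inl_injective,
    ncard_image_of_injective _ Sum.inr_injective]
  rfl

lemma Set.ncard_le_two_mul_ncard_of_forall_exists_mem_sym2 {α : Type*} {S : Set α}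
    {F : Set (Sym2 α)} (hF : F.Finite) (hS : ∀ v ∈ S, ∃ e ∈ F, v ∈ e) :
    S.ncard ≤ 2 * F.ncard := by
  classical
  calc S.ncard ≤ (⋃ e ∈ hF.toFinset, (e.toFinset : Set α)).ncard := by
        refine ncard_le_ncard (fun v hv => ?_) (Finite.biUnion (Finset.finite_toSet _)
          fun e _ => Finset.finite_toSet _)
        obtain ⟨e, he, hve⟩ := hS v hv
        exact mem_biUnion (by simpa using he) (by simpa using hve)
    _ ≤ ∑ e ∈ hF.toFinset, (e.toFinset : Set α).ncard := Finset.set_ncard_biUnion_le _ _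
    _ ≤ ∑ _e ∈ hF.toFinset, 2 := Finset.sum_le_sum fun e _ => by
        rw [ncard_coe_finset, Sym2.card_toFinset]; split_ifs <;> omega
    _ = 2 * F.ncard := by rw [Finset.sum_const, smul_eq_mul, mul_comm, ncard_eq_toFinset_card F hF]

lemma Sym2.eq_mk_of_forall_mem_eq_or_eq {α : Type*} {u v : α} {f : Sym2 α} (hf : ¬f.IsDiag)
    (h : ∀ w ∈ f, w = u ∨ w = v) : f = s(u, v) := by
  induction f using Sym2.ind with
  | _ x y =>
    rw [Sym2.mk_isDiag_iff] at hf
    rcases h x (Sym2.mem_mk_left x y) with rfl | rfl <;>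
      rcases h y (Sym2.mem_mk_right x y) with rfl | rfl <;> simp_all [Sym2.eq_swap]

lemma setDifferential_eq_ncard_preimages {α β : Type*} [Finite α] [Finite β]
    (H : SimpleGraph (α ⊕ β)) (D : Set (α ⊕ β)) :
    setDifferential H D =
      (Sum.inl ⁻¹' extBoundary H D).ncard + (Sum.inr ⁻¹' extBoundary H D).ncard -
        ((Sum.inl ⁻¹' D).ncard + (Sum.inr ⁻¹' D).ncard : ℤ) := by
  rw [setDifferential, ← ncard_preimage_inl_add_ncard_preimage_inr D,
    ← ncard_preimage_inl_add_ncard_preimage_inr (extBoundary H D)]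
  push_cast
  rfl

def SimpleGraph.edgesIn {V : Type*} (G : SimpleGraph V) (C : Set V) : Set G.edgeSet :=
  {e | ∀ v ∈ (e : Sym2 V), v ∈ C}

-- `2 |E(K[C])| = |C| (|C| - 1)`, written without truncated subtraction.
lemma SimpleGraph.two_mul_ncard_edgesIn_top_add_ncard {V : Type*} [Finite V] (C : Set V) :
    2 * ((⊤ : SimpleGraph V).edgesIn C).ncard + C.ncard = C.ncard * C.ncard := by
  classical
  have : Fintype V := Fintype.ofFinite V
  have himage : Subtype.val '' (⊤ : SimpleGraph V).edgesIn C =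
      (C.toFinset.offDiag.image Sym2.mk.uncurry : Set (Sym2 V)) := by
    ext z
    induction z using Sym2.ind with
    | _ x y => aesop (add simp [SimpleGraph.edgesIn, Sym2.mk_isDiag_iff])
  rw [← ncard_image_of_injective _ Subtype.val_injective, himage, ncard_coe_finset,
    Sym2.two_mul_card_image_offDiag, Finset.offDiag_card, ← ncard_eq_toFinset_card']
  have := Nat.le_mul_self C.ncard
  omega

lemma SimpleGraph.two_mul_card_edgeSet_top_add_card (V : Type*) [Finite V] :
    2 * Nat.card (⊤ : SimpleGraph V).edgeSet + Nat.card V = Nat.card V * Nat.card V := by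
  have huniv : (⊤ : SimpleGraph V).edgesIn univ = univ :=
    eq_univ_of_forall fun _ _ _ => mem_univ _
  simpa [huniv] using SimpleGraph.two_mul_ncard_edgesIn_top_add_ncard (univ : Set V)

section Subdivision

variable {V : Type*} {G : SimpleGraph V}

@[simp] lemma subdivision_adj_inl_inr {v : V} {e : G.edgeSet} :
    (subdivision G).Adj (Sum.inl v) (Sum.inr e) ↔ v ∈ (e : Sym2 V) := Iff.rfl

@[simp] lemma subdivision_adj_inr_inl {v : V} {e : G.edgeSet} :
    (subdivision G).Adj (Sum.inr e) (Sum.inl v) ↔ v ∈ (e : Sym2 V) := Iff.rfl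

@[simp] lemma subdivision_not_adj_inl_inl {v w : V} :
    ¬(subdivision G).Adj (Sum.inl v) (Sum.inl w) := id

@[simp] lemma subdivision_not_adj_inr_inr {e f : G.edgeSet} :
    ¬(subdivision G).Adj (Sum.inr e) (Sum.inr f) := id

variable {D : Set (V ⊕ G.edgeSet)}

lemma inl_mem_extBoundary_subdivision {v : V} :
    Sum.inl v ∈ extBoundary (subdivision G) D ↔
      Sum.inl v ∉ D ∧ ∃ e : G.edgeSet, Sum.inr e ∈ D ∧ v ∈ (e : Sym2 V) := by
  simp [extBoundary, Sum.exists]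

lemma inr_mem_extBoundary_subdivision {e : G.edgeSet} :
    Sum.inr e ∈ extBoundary (subdivision G) D ↔
      Sum.inr e ∉ D ∧ ∃ v ∈ (e : Sym2 V), Sum.inl v ∈ D := by
  simp [extBoundary, Sum.exists, and_comm]

end Subdivision

theorem two_mul_setDifferential_subdivision_le {V : Type*} [Finite V] (G : SimpleGraph V)
    (D : Set (V ⊕ G.edgeSet)) :
    2 * setDifferential (subdivision G) D ≤
      2 * ((Nat.card G.edgeSet : ℤ) - (G.edgesIn (Sum.inl ⁻¹' D)ᶜ).ncard) +
        (Sum.inl ⁻¹' D)ᶜ.ncard - 2 * (Sum.inl ⁻¹' D).ncard := by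
  rw [setDifferential_eq_ncard_preimages]
  set A := Sum.inl ⁻¹' D
  set F := Sum.inr ⁻¹' D
  set B := extBoundary (subdivision G) D
  have hBV_cover : ∀ v ∈ Sum.inl ⁻¹' B, ∃ e ∈ Subtype.val '' F, v ∈ e := by
    intro v hv
    obtain ⟨-, e, he, hve⟩ := inl_mem_extBoundary_subdivision.1 hv
    exact ⟨e, mem_image_of_mem _ he, hve⟩
  have hBV_sub : Sum.inl ⁻¹' B ⊆ Aᶜ := fun v hv => (inl_mem_extBoundary_subdivision.1 hv).1
  have hBE_disj : Disjoint (Sum.inr ⁻¹' B) (G.edgesIn Aᶜ) := by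
    refine disjoint_left.2 fun e he hin => ?_
    obtain ⟨-, v, hve, hv⟩ := inr_mem_extBoundary_subdivision.1 he
    exact hin v hve hv
  have hBV_le_F : (Sum.inl ⁻¹' B).ncard ≤ 2 * F.ncard := by
    simpa [ncard_image_of_injective _ Subtype.val_injective] using
      ncard_le_two_mul_ncard_of_forall_exists_mem_sym2 (toFinite _) hBV_cover
  have hBV_le_A : (Sum.inl ⁻¹' B).ncard ≤ Aᶜ.ncard := ncard_le_ncard hBV_sub
  have hBE_le : (Sum.inr ⁻¹' B).ncard + (G.edgesIn Aᶜ).ncard ≤ Nat.card G.edgeSet :=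
    ncard_union_eq hBE_disj ▸ ncard_le_card _
  omega

theorem setDifferential_subdivision_top_le {V : Type*} [Finite V]
    (D : Set (V ⊕ (⊤ : SimpleGraph V).edgeSet)) :
    setDifferential (subdivision ⊤) D ≤
      Nat.card (⊤ : SimpleGraph V).edgeSet + 2 - Nat.card V := by
  have hD := two_mul_setDifferential_subdivision_le ⊤ D
  have hC := SimpleGraph.two_mul_ncard_edgesIn_top_add_ncard (Sum.inl ⁻¹' D)ᶜ
  have hA := ncard_add_ncard_compl (Sum.inl ⁻¹' D)
  set c := (Sum.inl ⁻¹' D)ᶜ.ncard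
  zify at hC hA
  nlinarith [sq_nonneg ((c : ℤ) - 2)]

theorem exists_setDifferential_subdivision_eq {V : Type*} [Finite V] {G : SimpleGraph V}
    {u v : V} (huv : G.Adj u v) :
    ∃ D, setDifferential (subdivision G) D = Nat.card G.edgeSet + 2 - Nat.card V := by
  set e : G.edgeSet := ⟨s(u, v), huv⟩
  set D : Set (V ⊕ G.edgeSet) := Sum.inl '' {u, v}ᶜ ∪ {Sum.inr e} with hD
  have hA : Sum.inl ⁻¹' D = {u, v}ᶜ := by ext; simp [hD]
  have hF : Sum.inr ⁻¹' D = {e} := by ext; simp [hD]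
  have hBV : Sum.inl ⁻¹' extBoundary (subdivision G) D = {u, v} := by
    ext w
    aesop (add simp [inl_mem_extBoundary_subdivision, hD, e])
  have hBE : Sum.inr ⁻¹' extBoundary (subdivision G) D = {e}ᶜ := by
    ext f
    suffices f ≠ e → ∃ w ∈ (f : Sym2 V), w ≠ u ∧ w ≠ v by
      simpa [inr_mem_extBoundary_subdivision, hD]
    intro hfe
    by_contra! h
    exact hfe (Subtype.ext (Sym2.eq_mk_of_forall_mem_eq_or_eq (G.not_isDiag_of_mem_edgeSet f.2)
      fun w hw => or_iff_not_imp_left.2 (h w hw)))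
  have hV := ncard_add_ncard_compl ({u, v} : Set V)
  have hE := ncard_add_ncard_compl ({e} : Set G.edgeSet)
  rw [ncard_pair huv.ne] at hV
  rw [ncard_singleton] at hE
  refine ⟨D, ?_⟩
  rw [setDifferential_eq_ncard_preimages, hA, hF, hBV, hBE, ncard_pair huv.ne, ncard_singleton]
  omega

/-- For the complete graph `K_n` with `n ≥ 3`,
`∂(S(K_n)) = n(n-1)/2 + 2 - n`. -/
theorem differential_subdivision_complete (n : ℕ) (hn : 3 ≤ n) :
    graphDifferential (subdivision (⊤ : SimpleGraph (Fin n))) =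
      (n : ℤ) * (n - 1) / 2 + 2 - n := by
  have hadj : (⊤ : SimpleGraph (Fin n)).Adj ⟨0, by omega⟩ ⟨1, by omega⟩ := by simp
  obtain ⟨D₀, hD₀⟩ := exists_setDifferential_subdivision_eq hadj
  have hmax : IsGreatest
      {x | ∃ D, x = setDifferential (subdivision (⊤ : SimpleGraph (Fin n))) D}
      (Nat.card (⊤ : SimpleGraph (Fin n)).edgeSet + 2 - n : ℤ) := by
    refine ⟨⟨D₀, by simpa using hD₀.symm⟩, ?_⟩
    rintro _ ⟨D, rfl⟩
    simpa using setDifferential_subdivision_top_le D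
  have hE := SimpleGraph.two_mul_card_edgeSet_top_add_card (Fin n)
  rw [Nat.card_fin] at hE
  have h2E : (n : ℤ) * (n - 1) = 2 * Nat.card (⊤ : SimpleGraph (Fin n)).edgeSet := by
    zify at hE
    linarith
  rw [graphDifferential, hmax.csSup_eq, h2E, Int.mul_ediv_cancel_left _ two_ne_zero]
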